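/- arXiv:0710.2704 — 2 statements merged into one kernel-verified Lean document; each statement's English description precedes it below -/
import Mathlib

section
/- There exist constants C, N₀ > 0 depending only on α and β ≠ 0 such that: if ξ₁ + ξ₂ + ξ₃ = 0, and with N_max ≥ N_med ≥ N_min the decreasing rearrangement of |ξ₁|, |ξ₂|, |ξ₃| one has N_med ≥ N₀, then |p(ξ₁) + p(ξ₂) + p(ξ₃)| ≥ C · N_max⁴ · N_min, where p(ξ) = -βξ⁵ + αξ³. -/
/-!
On the plane `ξ₁ + ξ₂ + ξ₃ = 0` one has `Σ ξᵢ³ = 3 ξ₁ξ₂ξ₃` and `Σ ξᵢ⁵ = (5/2) ξ₁ξ₂ξ₃ Σ ξᵢ²`,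
so the resonance function factors as `ξ₁ξ₂ξ₃ (3α - (5/2) β Σ ξᵢ²)`. The product has modulus
`N_max N_med N_min` with `N_med ≥ N_max / 2`, and once the frequencies are large the quintic term
dominates, making the second factor at least `|β| N_max²` in modulus.
-/

def kawaharaSymbol (α β ξ : ℝ) : ℝ := -β * ξ ^ 5 + α * ξ ^ 3

def med3 {R : Type*} [AddCommGroup R] [LinearOrder R] (a b c : R) : R :=
  a + b + c - max a (max b c) - min a (min b c)

section OrderStatistics

variable {R : Type*} [CommRing R] [LinearOrder R] [IsStrictOrderedRing R] (a b c : R)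

lemma min_le_med3 : min a (min b c) ≤ med3 a b c := by
  unfold med3
  simp only [max_def, min_def]
  split_ifs <;> linarith

lemma med3_le_max : med3 a b c ≤ max a (max b c) := by
  unfold med3
  simp only [max_def, min_def]
  split_ifs <;> linarith

lemma mul_mul_eq_max_mul_med3_mul_min :
    a * b * c = max a (max b c) * med3 a b c * min a (min b c) := by
  unfold med3
  simp only [max_def, min_def]
  split_ifs <;> first | ring1 | (exfalso; linarith)

lemma max_le_two_mul_med3 (h : 2 * max a (max b c) ≤ a + b + c) :
    max a (max b c) ≤ 2 * med3 a b c := by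
  have := min_le_med3 a b c
  unfold med3 at *
  linarith

lemma sq_max_le_sum_sq :
    max a (max b c) ^ 2 ≤ a ^ 2 + b ^ 2 + c ^ 2 := by
  rcases max_choice b c with hbc | hbc <;> rcases max_choice a (max b c) with h | h <;>
    rw [h] <;> try rw [hbc]
  all_goals nlinarith [sq_nonneg a, sq_nonneg b, sq_nonneg c]

end OrderStatistics

section SumZero

variable {R : Type*} [CommRing R] {a b c : R}

lemma sum_pow_three_of_add_eq_zero (h : a + b + c = 0) :
    a ^ 3 + b ^ 3 + c ^ 3 = 3 * a * b * c := by
  rw [show c = -a - b by linear_combination h]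
  ring

lemma two_mul_sum_pow_five_of_add_eq_zero (h : a + b + c = 0) :
    2 * (a ^ 5 + b ^ 5 + c ^ 5) = 5 * a * b * c * (a ^ 2 + b ^ 2 + c ^ 2) := by
  rw [show c = -a - b by linear_combination h]
  ring

end SumZero

lemma kawaharaSymbol_add_add_of_add_eq_zero (α β : ℝ) {ξ₁ ξ₂ ξ₃ : ℝ} (h : ξ₁ + ξ₂ + ξ₃ = 0) :
    kawaharaSymbol α β ξ₁ + kawaharaSymbol α β ξ₂ + kawaharaSymbol α β ξ₃ =
      ξ₁ * ξ₂ * ξ₃ * (3 * α - 5 / 2 * β * (ξ₁ ^ 2 + ξ₂ ^ 2 + ξ₃ ^ 2)) := by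
  unfold kawaharaSymbol
  linear_combination α * sum_pow_three_of_add_eq_zero h -
    β / 2 * two_mul_sum_pow_five_of_add_eq_zero h

lemma abs_mul_le_abs_three_mul_sub {α β S : ℝ} (h : 2 * |α| ≤ |β| * S) :
    |β| * S ≤ |3 * α - 5 / 2 * β * S| := by
  have hβS : |β| * S ≤ |β * S| := by
    rw [abs_mul]
    exact mul_le_mul_of_nonneg_left (le_abs_self S) (abs_nonneg β)
  calc |β| * S ≤ 5 / 2 * |β * S| - 3 * |α| := by linarith
    _ = |5 / 2 * β * S| - |3 * α| := by
        rw [mul_assoc, abs_mul, abs_mul 3]; norm_num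
    _ ≤ |3 * α - 5 / 2 * β * S| := by
        rw [abs_sub_comm]; exact abs_sub_abs_le_abs_sub _ _

lemma two_mul_max_abs_le_of_add_eq_zero {a b c : ℝ} (h : a + b + c = 0) :
    2 * max |a| (max |b| |c|) ≤ |a| + |b| + |c| := by
  have ha : |a| ≤ |b| + |c| := by
    rw [show a = -(b + c) by linear_combination h, abs_neg]; exact abs_add_le b c
  have hb : |b| ≤ |a| + |c| := by
    rw [show b = -(a + c) by linear_combination h, abs_neg]; exact abs_add_le a c
  have hc : |c| ≤ |a| + |b| := by
    rw [show c = -(a + b) by linear_combination h, abs_neg]; exact abs_add_le a b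
  rcases max_choice |b| |c| with hbc | hbc <;> rcases max_choice |a| (max |b| |c|) with h | h <;>
    rw [h] <;> try rw [hbc]
  all_goals linarith

theorem kawahara_resonance_lower_bound (α β : ℝ) (hβ : β ≠ 0) :
    ∃ C > (0:ℝ), ∃ N₀ > (0:ℝ), ∀ ξ₁ ξ₂ ξ₃ : ℝ, ξ₁ + ξ₂ + ξ₃ = 0 →
      ∀ Nmax Nmed Nmin : ℝ,
        Nmax = max |ξ₁| (max |ξ₂| |ξ₃|) →
        Nmin = min |ξ₁| (min |ξ₂| |ξ₃|) →
        Nmed = |ξ₁| + |ξ₂| + |ξ₃| - Nmax - Nmin →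
        N₀ ≤ Nmed →
        C * Nmax^4 * Nmin ≤
          |(-β * ξ₁^5 + α * ξ₁^3) + (-β * ξ₂^5 + α * ξ₂^3) +
            (-β * ξ₃^5 + α * ξ₃^3)| := by
  have hβ' : 0 < |β| := abs_pos.mpr hβ
  refine ⟨|β| / 2, by positivity, 2 * |α| / |β| + 1, by positivity, ?_⟩
  rintro ξ₁ ξ₂ ξ₃ hsum Nmax Nmed Nmin rfl rfl rfl hN
  change 2 * |α| / |β| + 1 ≤ med3 |ξ₁| |ξ₂| |ξ₃| at hN
  change _ ≤ |kawaharaSymbol α β ξ₁ + kawaharaSymbol α β ξ₂ + kawaharaSymbol α β ξ₃|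
  rw [kawaharaSymbol_add_add_of_add_eq_zero α β hsum, abs_mul, abs_mul, abs_mul,
    mul_mul_eq_max_mul_med3_mul_min |ξ₁| |ξ₂| |ξ₃|]
  set S := ξ₁ ^ 2 + ξ₂ ^ 2 + ξ₃ ^ 2
  set Nmax := max |ξ₁| (max |ξ₂| |ξ₃|)
  set Nmin := min |ξ₁| (min |ξ₂| |ξ₃|)
  set Nmed := med3 |ξ₁| |ξ₂| |ξ₃|
  have hNmin : 0 ≤ Nmin := le_min (abs_nonneg _) (le_min (abs_nonneg _) (abs_nonneg _))
  have hNmed : 0 ≤ Nmed := le_trans (by positivity) hN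
  have hNmax : 0 ≤ Nmax := hNmed.trans (med3_le_max _ _ _)
  have hmax_le_med : Nmax ≤ 2 * Nmed :=
    max_le_two_mul_med3 _ _ _ (two_mul_max_abs_le_of_add_eq_zero hsum)
  have hmax_sq : Nmax ^ 2 ≤ S := by
    simpa only [sq_abs] using sq_max_le_sum_sq |ξ₁| |ξ₂| |ξ₃|
  have hS : 2 * |α| ≤ |β| * S := by
    have h_le_max : 2 * |α| / |β| + 1 ≤ Nmax := hN.trans (med3_le_max _ _ _)
    have h_le_S : 2 * |α| / |β| + 1 ≤ S := by
      nlinarith [show 0 ≤ 2 * |α| / |β| by positivity]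
    calc 2 * |α| ≤ |β| * (2 * |α| / |β| + 1) := by
          rw [mul_add, mul_div_cancel₀ _ hβ'.ne']; linarith
      _ ≤ |β| * S := by gcongr
  calc |β| / 2 * Nmax ^ 4 * Nmin = Nmax * (Nmax / 2) * Nmin * (|β| * Nmax ^ 2) := by ring
    _ ≤ Nmax * Nmed * Nmin * (|β| * S) := by gcongr; linarith
    _ ≤ Nmax * Nmed * Nmin * |3 * α - 5 / 2 * β * S| := by
        gcongr
        exact abs_mul_le_abs_three_mul_sub hS
end

section
/- Let s ≥ 0 and 0 < ε ≤ 1/4. There is a constant C such that for all dyadic N ≥ 1: ∑ over dyadic N_min ≤ N and dyadic L_min, L_med with 1 ≤ L_min ≤ L_med and L_med ≥ N⁴N_min of N^{1/2} (1+N_min)^{−s} N_min^{1/2} L_min^{−ε} L_med^{−(1/2−ε)} ≤ C. -/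
/-!
With `N = 2^m`, `N_min = 2^i`, `L_min = 2^j`, `L_med = 2^k`, drop `(1 + N_min)^(-s) ≤ 1`.
On the support `k ≥ 4m + i`, so the decay `L_med^(-(1/2 - ε))` absorbs `N^(1/2) N_min^(1/2)`
with room to spare: each summand is at most `2^(-(ε + 1/20)(m - i)) 2^(-ε j) 2^(-k/20)`, a
product of three geometric sequences whose total sum does not depend on `m`.
-/

open Real

lemma hasSum_ite_le_geometric {r : ℝ} (hr₀ : 0 ≤ r) (hr₁ : r < 1) (m : ℤ) :
    HasSum (fun i : ℤ => if i ≤ m then r ^ (m - i).toNat else 0) (1 - r)⁻¹ := by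
  have hinj : Function.Injective (fun n : ℕ => m - n) := fun a b h => by simpa using h
  refine (hinj.hasSum_iff fun i hi => if_neg fun him =>
    hi ⟨(m - i).toNat, by simp; omega⟩).mp ?_
  convert hasSum_geometric_of_lt_one hr₀ hr₁ with n
  simp

lemma HasSum.mul_of_nonneg {ι κ : Type*} {f : ι → ℝ} {g : κ → ℝ} {a b : ℝ}
    (hf : HasSum f a) (hg : HasSum g b) (hf₀ : 0 ≤ f) (hg₀ : 0 ≤ g) :
    HasSum (fun x : ι × κ => f x.1 * g x.2) (a * b) :=
  hf.mul hg (hf.summable.mul_of_nonneg hg.summable hf₀ hg₀)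

lemma two_rpow_neg_lt_one {c : ℝ} (hc : 0 < c) : (2 : ℝ) ^ (-c) < 1 :=
  rpow_lt_one_of_one_lt_of_neg one_lt_two (neg_neg_of_pos hc)

lemma high_modulation_exponent_le {ε m i k : ℝ} (hε : ε ≤ 1 / 4) (hm : 0 ≤ m)
    (hk : 4 * m + i ≤ k) :
    m / 2 + i / 2 - (1 / 2 - ε) * k ≤ -(ε + 1 / 20) * (m - i) - 1 / 20 * k := by
  nlinarith [mul_nonneg (by linarith : (0 : ℝ) ≤ 9 / 20 - ε)
      (by linarith : 0 ≤ k - (4 * m + i)),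
    mul_nonneg (by linarith : (0 : ℝ) ≤ 1 / 4 - ε) hm]

lemma four_mul_add_le_of_two_zpow_le {m i : ℤ} {k : ℕ}
    (h : ((2 : ℝ) ^ m) ^ 4 * 2 ^ i ≤ 2 ^ k) : 4 * m + i ≤ k := by
  rw [← zpow_natCast, ← zpow_mul, ← zpow_add₀ two_ne_zero, ← zpow_natCast (2 : ℝ) k,
    zpow_le_zpow_iff_right₀ one_lt_two] at h
  omega

noncomputable def highModulationSummand (s ε : ℝ) (m : ℕ) (p : ℤ × ℕ × ℕ) : ℝ :=
  if (2:ℝ)^p.1 ≤ (2:ℝ)^(m:ℤ) ∧ p.2.1 ≤ p.2.2 ∧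
      ((2:ℝ)^(m:ℤ))^4 * (2:ℝ)^p.1 ≤ (2:ℝ)^p.2.2 then
    ((2:ℝ)^(m:ℤ))^((1:ℝ)/2) * (1 + (2:ℝ)^p.1)^(-s) * ((2:ℝ)^p.1)^((1:ℝ)/2)
      * ((2:ℝ)^p.2.1)^(-ε) * ((2:ℝ)^p.2.2)^(-(1/2 - ε))
  else 0

lemma highModulationSummand_nonneg (s ε : ℝ) (m : ℕ) (p : ℤ × ℕ × ℕ) :
    0 ≤ highModulationSummand s ε m p := by
  unfold highModulationSummand
  split_ifs <;> positivity

lemma highModulationSummand_le {s ε : ℝ} (hs : 0 ≤ s) (hε : ε ≤ 1 / 4) (m : ℕ) (i : ℤ)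
    (j k : ℕ) :
    highModulationSummand s ε m (i, j, k) ≤
      (if i ≤ m then ((2 : ℝ) ^ (-(ε + 1 / 20))) ^ (m - i).toNat else 0) *
        (((2 : ℝ) ^ (-ε)) ^ j * ((2 : ℝ) ^ (-(1 / 20 : ℝ))) ^ k) := by
  unfold highModulationSummand
  split_ifs with h hi
  · obtain ⟨hi, -, hk⟩ := h
    have hmi : ((m - i).toNat : ℝ) = m - i := by
      rw [zpow_le_zpow_iff_right₀ one_lt_two] at hi
      exact_mod_cast Int.toNat_of_nonneg (sub_nonneg.mpr hi)
    have hk : 4 * (m : ℝ) + i ≤ k := by exact_mod_cast four_mul_add_le_of_two_zpow_le hk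
    have hmid : (1 + (2 : ℝ) ^ i) ^ (-s) ≤ 1 :=
      rpow_le_one_of_one_le_of_nonpos (by linarith [zpow_pos (two_pos : (0 : ℝ) < 2) i])
        (neg_nonpos.mpr hs)
    calc _ ≤ ((2:ℝ)^(m:ℤ))^((1:ℝ)/2) * 1 * ((2:ℝ)^i)^((1:ℝ)/2)
          * ((2:ℝ)^j)^(-ε) * ((2:ℝ)^k)^(-(1/2 - ε)) := by gcongr
      _ = 2 ^ (m / 2 + i / 2 - (1 / 2 - ε) * k + -ε * j) := by
        simp only [← rpow_intCast_mul zero_le_two, ← rpow_natCast_mul zero_le_two, mul_one,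
          Int.cast_natCast, ← rpow_add two_pos]
        ring_nf
      _ ≤ 2 ^ (-(ε + 1 / 20) * (m - i) - 1 / 20 * k + -ε * j) :=
        rpow_le_rpow_of_exponent_le one_le_two
          (add_le_add_left (high_modulation_exponent_le hε m.cast_nonneg hk) _)
      _ = _ := by
        simp only [← rpow_mul_natCast zero_le_two, hmi, ← rpow_add two_pos]
        ring_nf
  · exact absurd ((zpow_le_zpow_iff_right₀ one_lt_two).mp h.1) hi
  · positivity
  · positivity

theorem dyadic_sum_bilinear_high_modulation_s_nonneg (s ε : ℝ)
    (hs : 0 ≤ s) (hε1 : 0 < ε) (hε2 : ε ≤ 1/4) :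
    ∃ C : ℝ, ∀ m : ℕ,
      (∑' p : ℤ × ℕ × ℕ,
        if (2:ℝ)^p.1 ≤ (2:ℝ)^(m:ℤ) ∧ p.2.1 ≤ p.2.2 ∧
            ((2:ℝ)^(m:ℤ))^4 * (2:ℝ)^p.1 ≤ (2:ℝ)^p.2.2 then
          ((2:ℝ)^(m:ℤ))^((1:ℝ)/2) * (1 + (2:ℝ)^p.1)^(-s) * ((2:ℝ)^p.1)^((1:ℝ)/2)
            * ((2:ℝ)^p.2.1)^(-ε) * ((2:ℝ)^p.2.2)^(-(1/2 - ε))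
        else 0) ≤ C := by
  set r₁ : ℝ := 2 ^ (-(ε + 1 / 20))
  set r₂ : ℝ := 2 ^ (-ε)
  set r₃ : ℝ := 2 ^ (-(1 / 20 : ℝ))
  refine ⟨(1 - r₁)⁻¹ * ((1 - r₂)⁻¹ * (1 - r₃)⁻¹), fun m => ?_⟩
  have hr₂ := hasSum_geometric_of_lt_one (by positivity) (two_rpow_neg_lt_one hε1)
  have hr₃ := hasSum_geometric_of_lt_one (by positivity)
    (two_rpow_neg_lt_one (by norm_num : (0 : ℝ) < 1 / 20))
  have hr₂₃ := hr₂.mul_of_nonneg hr₃ (fun j => by positivity) (fun k => by positivity)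
  have hmajorant := (hasSum_ite_le_geometric (by positivity)
    (two_rpow_neg_lt_one (by positivity : 0 < ε + 1 / 20)) m).mul_of_nonneg hr₂₃
    (fun i => by dsimp only; split_ifs <;> positivity) (fun q => by positivity)
  have hbound := fun p : ℤ × ℕ × ℕ => highModulationSummand_le hs hε2 m p.1 p.2.1 p.2.2
  exact hasSum_le hbound ((hmajorant.summable.of_nonneg_of_le
    (highModulationSummand_nonneg s ε m) hbound).hasSum) hmajorant
end
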